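/- The function F is twice differentiable on ℝ with second derivative F''(Q) = -∬_Ω k(x,s) Λ(x,s)² e^{-Q Λ(x,s)} d(s,x), and F''(Q) < 0 for every Q ∈ ℝ; in particular, F is strictly concave on ℝ. -/

import Mathlib

open MeasureTheory Real Set Filter

/-- `Λ(x,s) = ∫_s^x θ(t) dt`. -/
noncomputable def Lam (θ : ℝ → ℝ) (x s : ℝ) : ℝ := ∫ t in s..x, θ t

/-- `w(x;Q) = Q e^{-γx} ∫₀^x e^{γs} θ(s) e^{-Q Λ(x,s)} ds`. -/
noncomputable def w (γ : ℝ) (θ : ℝ → ℝ) (Q x : ℝ) : ℝ :=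
  Q * Real.exp (-γ * x) * ∫ s in (0:ℝ)..x, Real.exp (γ * s) * θ s * Real.exp (-Q * Lam θ x s)
/-- The kernel `k(x,s) = (p(x)/N)·θ(s)·e^{-γ(x-s)}`. -/
noncomputable def kker (γ N : ℝ) (p θ : ℝ → ℝ) (x s : ℝ) : ℝ :=
  (p x / N) * θ s * Real.exp (-γ * (x - s))

/-- The triangle `Ω = {(x,s) : 0 ≤ s ≤ x ≤ A}` (first coordinate `x`, second `s`). -/
def Tri (A : ℝ) : Set (ℝ × ℝ) := {q | 0 ≤ q.2 ∧ q.2 ≤ q.1 ∧ q.1 ≤ A}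

/-- Basic reproductive number `R₀ = ∬_Ω k(x,s) d(s,x)`. -/
noncomputable def R0 (γ N A : ℝ) (p θ : ℝ → ℝ) : ℝ :=
  ∫ q in Tri A, kker γ N p θ q.1 q.2

/-- `F(Q) = 1 - ∬_Ω k(x,s) e^{-Q Λ(x,s)} d(s,x)`. -/
noncomputable def FF (γ N A : ℝ) (p θ : ℝ → ℝ) (Q : ℝ) : ℝ :=
  1 - ∫ q in Tri A, kker γ N p θ q.1 q.2 * Real.exp (-Q * Lam θ q.1 q.2)

/-- Iteration map `T(Q) = Q·(1 - F(Q))`. -/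
noncomputable def TT (γ N A : ℝ) (p θ : ℝ → ℝ) (Q : ℝ) : ℝ :=
  Q * (1 - FF γ N A p θ Q)

/-!
Both derivatives come from differentiating under the integral sign: on the compact triangle the
integrands are continuous, so the `Q`-derivative is uniformly bounded for `Q` near any `Q₀`.
The integrand `k Λ² e^{-QΛ}` of `-F''` is nonnegative on `Ω` and positive on the open triangle
`0 < s < x < A`, where `Λ > 0` because `θ > 0`; hence `F'' < 0` and `F` is strictly concave.
-/

section ParametricExp

variable {X : Type*} [TopologicalSpace X] [T2Space X] [MeasurableSpace X] [OpensMeasurableSpace X]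
  {μ : Measure X} {S : Set X}

theorem hasDerivAt_setIntegral_mul_exp_neg_mul [IsFiniteMeasureOnCompacts μ] {g h : X → ℝ}
    (hS : IsCompact S) (hg : ContinuousOn g S) (hh : ContinuousOn h S) (Q₀ : ℝ) :
    HasDerivAt (fun Q => ∫ q in S, g q * exp (-Q * h q) ∂μ)
      (-∫ q in S, g q * h q * exp (-Q₀ * h q) ∂μ) Q₀ := by
  have hSm : MeasurableSet S := hS.measurableSet
  have hF : ∀ Q : ℝ, ContinuousOn (fun q => g q * exp (-Q * h q)) S := fun Q =>
    hg.mul (continuousOn_const.mul hh).rexp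
  have hF' : ContinuousOn (fun z : ℝ × X => -(g z.2 * h z.2 * exp (-z.1 * h z.2)))
      (Metric.closedBall Q₀ 1 ×ˢ S) := by
    have hsnd : MapsTo Prod.snd (Metric.closedBall Q₀ 1 ×ˢ S) S := fun _ hz => hz.2
    have hh' := hh.comp continuousOn_snd hsnd
    exact (((hg.comp continuousOn_snd hsnd).mul hh').mul
      (continuousOn_fst.neg.mul hh').rexp).neg
  obtain ⟨C, hC⟩ := ((isCompact_closedBall Q₀ 1).prod hS).exists_bound_of_continuousOn hF'
  have key := hasDerivAt_integral_of_dominated_loc_of_deriv_le (μ := μ.restrict S)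
    (F' := fun Q q => -(g q * h q * exp (-Q * h q))) (bound := fun _ => C)
    (Metric.ball_mem_nhds Q₀ one_pos)
    (Eventually.of_forall fun Q => (hF Q).aestronglyMeasurable hSm)
    ((hF Q₀).integrableOn_compact hS)
    ((hF'.comp (continuousOn_const.prodMk continuousOn_id) fun q hq =>
      Set.mk_mem_prod (Metric.mem_closedBall_self zero_le_one) hq).aestronglyMeasurable hSm)
    ((ae_restrict_iff' hSm).2 (Eventually.of_forall fun q hq Q hQ =>
      hC (Q, q) (Set.mk_mem_prod (Metric.ball_subset_closedBall hQ) hq)))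
    (integrableOn_const hS.measure_lt_top.ne)
    (Eventually.of_forall fun q Q _ =>
      ((((hasDerivAt_neg Q).mul_const (h q)).exp.const_mul (g q)).congr_deriv (by ring)))
  simpa only [integral_neg] using key.2

theorem setIntegral_pos_of_pos_on_isOpen [IsFiniteMeasureOnCompacts μ] [μ.IsOpenPosMeasure]
    {f : X → ℝ} {U : Set X} (hS : IsCompact S) (hf : ContinuousOn f S) (hf0 : ∀ x ∈ S, 0 ≤ f x)
    (hU : IsOpen U) (hUne : U.Nonempty) (hUS : U ⊆ S) (hfU : ∀ x ∈ U, 0 < f x) :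
    0 < ∫ x in S, f x ∂μ := by
  refine (setIntegral_pos_iff_support_of_nonneg_ae
    (ae_restrict_of_forall_mem hS.measurableSet hf0) (hf.integrableOn_compact hS)).2 ?_
  exact (hU.measure_pos μ hUne).trans_le
    (measure_mono fun x hx => ⟨(hfU x hx).ne', hUS hx⟩)

end ParametricExp

theorem isCompact_Tri (A : ℝ) : IsCompact (Tri A) := by
  refine (isCompact_Icc (a := ((0 : ℝ), (0 : ℝ))) (b := (A, A))).of_isClosed_subset ?_ ?_
  · exact (isClosed_le continuous_const continuous_snd).inter
      ((isClosed_le continuous_snd continuous_fst).inter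
        (isClosed_le continuous_fst continuous_const))
  · rintro ⟨x, s⟩ ⟨h0s, hsx, hxA⟩
    exact ⟨⟨h0s.trans hsx, h0s⟩, hxA, hsx.trans hxA⟩

theorem Tri_subset_Icc_prod_Icc (A : ℝ) : Tri A ⊆ Icc 0 A ×ˢ Icc 0 A :=
  fun _ ⟨h0s, hsx, hxA⟩ => ⟨⟨h0s.trans hsx, hxA⟩, h0s, hsx.trans hxA⟩

theorem continuousOn_Lam {θ : ℝ → ℝ} {a b : ℝ} (hab : a ≤ b) (hθ : ContinuousOn θ (Icc a b)) :
    ContinuousOn (fun q : ℝ × ℝ => Lam θ q.1 q.2) (Icc a b ×ˢ Icc a b) := by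
  have hint : ∀ y ∈ Icc a b, IntervalIntegrable θ volume a y := fun y hy =>
    (hθ.mono (uIcc_subset_Icc (left_mem_Icc.2 hab) hy)).intervalIntegrable
  have hprim : ContinuousOn (fun y => ∫ t in a..y, θ t) (Icc a b) := by
    simpa [uIcc_of_le hab] using
      intervalIntegral.continuousOn_primitive_interval (μ := volume) (a := a) (b := b)
        (by simpa [uIcc_of_le hab] using hθ.integrableOn_Icc)
  refine ((hprim.comp continuousOn_fst fun _ hz => hz.1).sub
    (hprim.comp continuousOn_snd fun _ hz => hz.2)).congr fun z hz => ?_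
  exact (intervalIntegral.integral_interval_sub_left (hint _ hz.1) (hint _ hz.2)).symm

theorem continuousOn_kker {γ N : ℝ} {p θ : ℝ → ℝ} {s : Set ℝ} (hp : ContinuousOn p s)
    (hθ : ContinuousOn θ s) : ContinuousOn (fun q : ℝ × ℝ => kker γ N p θ q.1 q.2) (s ×ˢ s) :=
  (((hp.comp continuousOn_fst fun _ hz => hz.1).div_const N).mul
    (hθ.comp continuousOn_snd fun _ hz => hz.2)).mul
    (continuousOn_const.mul (continuousOn_fst.sub continuousOn_snd)).rexp

theorem kker_pos {γ N : ℝ} {p θ : ℝ → ℝ} {x s : ℝ} (hN : 0 < N) (hp : 0 < p x) (hθ : 0 < θ s) :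
    0 < kker γ N p θ x s := by
  unfold kker; positivity

theorem Lam_pos {θ : ℝ → ℝ} {x s : ℝ} (hsx : s < x) (hθc : ContinuousOn θ (Icc s x))
    (hθ : ∀ t ∈ Icc s x, 0 < θ t) : 0 < Lam θ x s :=
  intervalIntegral.intervalIntegral_pos_of_pos_on
    (hθc.intervalIntegrable_of_Icc hsx.le) (fun t ht => hθ t (Ioo_subset_Icc_self ht)) hsx

section SecondDerivative

variable {γ A N : ℝ} {θ p : ℝ → ℝ}

theorem hasDerivAt_FF (hA : 0 ≤ A) (hθc : ContinuousOn θ (Icc 0 A))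
    (hpc : ContinuousOn p (Icc 0 A)) (Q : ℝ) :
    HasDerivAt (FF γ N A p θ)
      (∫ q in Tri A, kker γ N p θ q.1 q.2 * Lam θ q.1 q.2 * exp (-Q * Lam θ q.1 q.2)) Q := by
  unfold FF
  simpa only [neg_neg] using
    (hasDerivAt_setIntegral_mul_exp_neg_mul (μ := volume) (isCompact_Tri A)
      ((continuousOn_kker (γ := γ) (N := N) hpc hθc).mono (Tri_subset_Icc_prod_Icc A))
      ((continuousOn_Lam hA hθc).mono (Tri_subset_Icc_prod_Icc A)) Q).const_sub 1

theorem hasDerivAt_deriv_FF (hA : 0 ≤ A) (hθc : ContinuousOn θ (Icc 0 A))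
    (hpc : ContinuousOn p (Icc 0 A)) (Q : ℝ) :
    HasDerivAt (deriv (FF γ N A p θ))
      (-∫ q in Tri A, kker γ N p θ q.1 q.2 * Lam θ q.1 q.2 ^ 2 * exp (-Q * Lam θ q.1 q.2)) Q := by
  have hk := (continuousOn_kker (γ := γ) (N := N) hpc hθc).mono (Tri_subset_Icc_prod_Icc A)
  have hL := (continuousOn_Lam hA hθc).mono (Tri_subset_Icc_prod_Icc A)
  rw [show deriv (FF γ N A p θ) = _ from funext fun Q => (hasDerivAt_FF hA hθc hpc Q).deriv]
  have hkL : ContinuousOn (fun q : ℝ × ℝ => kker γ N p θ q.1 q.2 * Lam θ q.1 q.2) (Tri A) :=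
    hk.mul hL
  convert hasDerivAt_setIntegral_mul_exp_neg_mul (μ := volume) (isCompact_Tri A) hkL hL Q using 4
  ring

theorem integral_kker_mul_Lam_sq_mul_exp_pos (hA : 0 < A) (hN : 0 < N)
    (hθc : ContinuousOn θ (Icc 0 A)) (hθpos : ∀ x ∈ Icc 0 A, 0 < θ x)
    (hpc : ContinuousOn p (Icc 0 A)) (hppos : ∀ x ∈ Icc 0 A, 0 < p x) (Q : ℝ) :
    0 < ∫ q in Tri A, kker γ N p θ q.1 q.2 * Lam θ q.1 q.2 ^ 2 * exp (-Q * Lam θ q.1 q.2) := by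
  have hsub := Tri_subset_Icc_prod_Icc A
  have hkpos : ∀ q ∈ Tri A, 0 < kker γ N p θ q.1 q.2 := fun q hq =>
    kker_pos hN (hppos _ (hsub hq).1) (hθpos _ (hsub hq).2)
  refine setIntegral_pos_of_pos_on_isOpen (U := {q | 0 < q.2 ∧ q.2 < q.1 ∧ q.1 < A})
    (isCompact_Tri A)
    ((((continuousOn_kker hpc hθc).mono hsub).mul
      (((continuousOn_Lam hA.le hθc).mono hsub).pow 2)).mul
      (continuousOn_const.mul ((continuousOn_Lam hA.le hθc).mono hsub)).rexp)
    (fun q hq => by have := hkpos q hq; positivity)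
    ((isOpen_lt continuous_const continuous_snd).inter
      ((isOpen_lt continuous_snd continuous_fst).inter (isOpen_lt continuous_fst continuous_const)))
    ⟨(2 * A / 3, A / 3), by refine ⟨?_, ?_, ?_⟩ <;> linarith⟩
    (fun q ⟨h0s, hsx, hxA⟩ => ⟨h0s.le, hsx.le, hxA.le⟩) fun q ⟨h0s, hsx, hxA⟩ => ?_
  have hIcc : Icc q.2 q.1 ⊆ Icc 0 A := Icc_subset_Icc h0s.le hxA.le
  have := hkpos q ⟨h0s.le, hsx.le, hxA.le⟩
  have := Lam_pos hsx (hθc.mono hIcc) fun t ht => hθpos t (hIcc ht)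
  positivity

end SecondDerivative

theorem F_second_deriv_general (γ A N : ℝ) (hA : 0 < A) (hN : 0 < N)
    (θ p : ℝ → ℝ)
    (hθc : ContinuousOn θ (Set.Icc 0 A)) (hθpos : ∀ x ∈ Set.Icc 0 A, 0 < θ x)
    (hpc : ContinuousOn p (Set.Icc 0 A)) (hppos : ∀ x ∈ Set.Icc 0 A, 0 < p x) :
    (∀ Q : ℝ, HasDerivAt (deriv (FF γ N A p θ))
      (-(∫ q in Tri A, kker γ N p θ q.1 q.2 * (Lam θ q.1 q.2)^2 *
        Real.exp (-Q * Lam θ q.1 q.2))) Q) ∧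
    (∀ Q : ℝ, -(∫ q in Tri A, kker γ N p θ q.1 q.2 * (Lam θ q.1 q.2)^2 *
        Real.exp (-Q * Lam θ q.1 q.2)) < 0) ∧
    StrictConcaveOn ℝ Set.univ (FF γ N A p θ) := by
  have hF'' := hasDerivAt_deriv_FF (γ := γ) (N := N) hA.le hθc hpc
  have hneg : ∀ Q : ℝ, -(∫ q in Tri A, kker γ N p θ q.1 q.2 * (Lam θ q.1 q.2)^2 *
      Real.exp (-Q * Lam θ q.1 q.2)) < 0 := fun Q =>
    neg_neg_of_pos (integral_kker_mul_Lam_sq_mul_exp_pos hA hN hθc hθpos hpc hppos Q)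
  refine ⟨hF'', hneg, strictConcaveOn_univ_of_deriv2_neg ?_ fun Q => ?_⟩
  · exact continuous_iff_continuousAt.2 fun Q => (hasDerivAt_FF hA.le hθc hpc Q).continuousAt
  · simpa only [Function.iterate_succ, Function.iterate_zero, Function.comp_apply, id,
      (hF'' Q).deriv] using hneg Q

/-- `F` is twice differentiable with
`F''(Q) = -∬_Ω k Λ² e^{-QΛ} < 0`; in particular `F` is strictly concave on `ℝ`. -/
theorem F_second_deriv (γ A N : ℝ) (hγ : 0 < γ) (hA : 0 < A) (hN : 0 < N)
    (θ p : ℝ → ℝ)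
    (hθc : ContinuousOn θ (Set.Icc 0 A)) (hθpos : ∀ x ∈ Set.Icc 0 A, 0 < θ x)
    (hpc : ContinuousOn p (Set.Icc 0 A)) (hppos : ∀ x ∈ Set.Icc 0 A, 0 < p x)
    (hnorm : (1/N) * ∫ x in (0:ℝ)..A, p x = 1) :
    (∀ Q : ℝ, HasDerivAt (deriv (FF γ N A p θ))
      (-(∫ q in Tri A, kker γ N p θ q.1 q.2 * (Lam θ q.1 q.2)^2 *
        Real.exp (-Q * Lam θ q.1 q.2))) Q) ∧
    (∀ Q : ℝ, -(∫ q in Tri A, kker γ N p θ q.1 q.2 * (Lam θ q.1 q.2)^2 *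
        Real.exp (-Q * Lam θ q.1 q.2)) < 0) ∧
    StrictConcaveOn ℝ Set.univ (FF γ N A p θ) :=
  F_second_deriv_general γ A N hA hN θ p hθc hθpos hpc hppos
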